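/- arXiv:2412.01763 — 3 statements merged into one kernel-verified Lean document; each statement's English description precedes it below -/
import Mathlib

section
/- The minimax risk Δ equals zero if and only if either G⁻(λ) ≥ ρ, or G⁻(λ) < ρ and λ = M. -/
open MeasureTheory Set

/-- Newsvendor cost of ordering quantity `q` under demand distribution `F`,
with underage cost `b` and overage cost `h`. -/
noncomputable def nvCost (b h : ℝ) (F : Measure ℝ) (q : ℝ) : ℝ :=
  ∫ x, (b * max (x - q) 0 + h * max (q - x) 0) ∂F

/-- Optimal newsvendor quantity: the `ρ`-th quantile of `F`. -/
noncomputable def qStar (ρ : ℝ) (F : Measure ℝ) : ℝ :=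
  sInf {q : ℝ | ρ ≤ (F (Iic q)).toReal}

/-- The set `𝒢` of admissible demand distributions: Borel probability measures on ℝ
supported on `[0, ∞)` with finite mean and optimal newsvendor quantity at most `M`. -/
def GoodDist (ρ M : ℝ) : Set (Measure ℝ) :=
  {F | IsProbabilityMeasure F ∧ F (Iio 0) = 0 ∧ Integrable id F ∧ qStar ρ F ≤ M}

/-- The ambiguity set `𝒜_λ`: all admissible distributions agreeing with `G` before `lam`. -/
def Ambig (ρ M : ℝ) (G : Measure ℝ) (lam : ℝ) : Set (Measure ℝ) :=
  {F | F ∈ GoodDist ρ M ∧ ∀ x < lam, F (Iic x) = G (Iic x)}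

/-- Worst-case regret of an ordering quantity `q` over the ambiguity set. -/
noncomputable def Regret (b h ρ M : ℝ) (G : Measure ℝ) (lam q : ℝ) : ℝ :=
  sSup ((fun F => nvCost b h F q - nvCost b h F (qStar ρ F)) '' Ambig ρ M G lam)

/-- Minimax risk `Δ`. -/
noncomputable def Risk (b h ρ M : ℝ) (G : Measure ℝ) (lam : ℝ) : ℝ :=
  sInf (Regret b h ρ M G lam '' Icc 0 M)

/-- The unidentifiable ordering quantity `q†_G`. -/
noncomputable def qDagger (b h M : ℝ) (G : Measure ℝ) (lam : ℝ) : ℝ :=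
  (b * M + h * lam - (b + h) * (G (Iio lam)).toReal * M) /
    ((b + h) * (1 - (G (Iio lam)).toReal))

/-- The two-point-tail distribution `F_p`: agrees with `G` on `[0, λ)`, places an atom
of mass `p` at `λ` and an atom of mass `1 - p - G⁻(λ)` at `M`. -/
noncomputable def Fp (G : Measure ℝ) (lam M p : ℝ) : Measure ℝ :=
  G.restrict (Iio lam) + ENNReal.ofReal p • Measure.dirac lam +
    ENNReal.ofReal (1 - p - (G (Iio lam)).toReal) • Measure.dirac M

/-- The `N`-fold product (i.i.d.) measure of `G` (equal to `Measure.pi` whenever `G`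
is sigma-finite, in particular for probability measures). -/
noncomputable def iidPi (N : ℕ) (G : Measure ℝ) : Measure (Fin N → ℝ) := by
  classical
  exact if h : SigmaFinite G then
    haveI := h
    Measure.pi fun _ => G
  else 0


/-!
If `ρ ≤ G⁻(λ)` or `λ = M`, all distributions in `𝒜_λ` have the same `ρ`-quantile `q̂`: the
quantile of `G` when it lies below `λ` (quantiles below `λ` only depend on the common CDF on
`(-∞, λ)`), and `λ` otherwise. Ordering `q̂` has zero regret against every `F ∈ 𝒜_λ`, so `Δ = 0`.

Otherwise `G⁻(λ) < ρ`, hence `λ ≤ q⋆_G ≤ M` and `λ < M`. Completing `G` on `[λ, ∞)` by a single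
atom at `λ`, resp. at `M`, gives members of `𝒜_λ` with quantile `λ`, resp. `M`. The subgradient
inequality of the newsvendor cost bounds the regret of `q` against them below by `h (q - λ)`,
resp. `κ (M - q)` with `κ = b - (b + h) G⁻(λ) > 0`; one of the two is at least
`min h κ * (M - λ) / 2`, so `Δ > 0`.
-/

open Filter Topology ProbabilityTheory

section Quantile

variable {ρ : ℝ} {F G : Measure ℝ}

lemma tendsto_cdf_nhdsLT (F : Measure ℝ) [IsProbabilityMeasure F] (x : ℝ) :
    Tendsto (cdf F) (𝓝[<] x) (𝓝 (F.real (Iio x))) := by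
  have hIio := (cdf F).measure_Iio (tendsto_cdf_atBot F) x
  rw [measure_cdf, sub_zero] at hIio
  have hnonneg : 0 ≤ Function.leftLim (cdf F) x :=
    (cdf_nonneg F (x - 1)).trans ((monotone_cdf F).le_leftLim (sub_one_lt x))
  rw [measureReal_def, hIio, ENNReal.toReal_ofReal hnonneg]
  exact (monotone_cdf F).tendsto_leftLim x

lemma measureReal_Iio_eq_of_cdf_eq [IsProbabilityMeasure F] [IsProbabilityMeasure G] {a : ℝ}
    (h : ∀ x < a, cdf F x = cdf G x) : F.real (Iio a) = G.real (Iio a) :=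
  tendsto_nhds_unique (tendsto_cdf_nhdsLT F a) <|
    (tendsto_cdf_nhdsLT G a).congr' (eventually_nhdsWithin_of_forall fun x hx => (h x hx).symm)

lemma qStar_eq_sInf_cdf [IsProbabilityMeasure F] : qStar ρ F = sInf {q | ρ ≤ cdf F q} := by
  simp only [qStar, cdf_eq_real, measureReal_def]

theorem qStar_le_iff [IsProbabilityMeasure F] (hρ0 : 0 < ρ) (hρ1 : ρ < 1) {x : ℝ} :
    qStar ρ F ≤ x ↔ ρ ≤ cdf F x := by
  rw [qStar_eq_sInf_cdf]
  set S := {q | ρ ≤ cdf F q}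
  have hbdd : BddBelow S := by
    obtain ⟨m, hm⟩ := ((tendsto_cdf_atBot F).eventually (gt_mem_nhds hρ0)).exists
    exact ⟨m, fun q hq => le_of_not_gt fun hqm => hq.not_gt <|
      (monotone_cdf F hqm.le).trans_lt hm⟩
  have hne : S.Nonempty := ((tendsto_cdf_atTop F).eventually (lt_mem_nhds hρ1)).exists.imp
    fun _ => le_of_lt
  refine ⟨fun hx => ?_, fun hx => csInf_le hbdd hx⟩
  have hinf : ρ ≤ cdf F (sInf S) := by
    refine ge_of_tendsto ((cdf F).right_continuous (sInf S) |>.mono Ioi_subset_Ici_self)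
      (eventually_nhdsWithin_of_forall fun y hy => ?_)
    obtain ⟨s, hs, hsy⟩ := exists_lt_of_csInf_lt hne hy
    exact hs.trans (monotone_cdf F hsy.le)
  exact hinf.trans (monotone_cdf F hx)

lemma lt_qStar_iff [IsProbabilityMeasure F] (hρ0 : 0 < ρ) (hρ1 : ρ < 1) {x : ℝ} :
    x < qStar ρ F ↔ cdf F x < ρ := by
  simpa only [not_le] using (qStar_le_iff hρ0 hρ1).not

lemma measureReal_Iio_qStar_le [IsProbabilityMeasure F] (hρ0 : 0 < ρ) (hρ1 : ρ < 1) :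
    F.real (Iio (qStar ρ F)) ≤ ρ :=
  le_of_tendsto (tendsto_cdf_nhdsLT F _) <| eventually_nhdsWithin_of_forall fun _ hx =>
    ((lt_qStar_iff hρ0 hρ1).1 hx).le

lemma le_qStar_of_measureReal_Iio_lt [IsProbabilityMeasure F] (hρ0 : 0 < ρ) (hρ1 : ρ < 1)
    {a : ℝ} (ha : F.real (Iio a) < ρ) : a ≤ qStar ρ F :=
  le_of_forall_lt fun y hy => (lt_qStar_iff hρ0 hρ1).2 <|
    (cdf_eq_real F y ▸ measureReal_mono (Iic_subset_Iio.2 hy)).trans_lt ha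

lemma qStar_nonneg (hρ0 : 0 < ρ) (h0 : F (Iio 0) = 0) : 0 ≤ qStar ρ F := by
  refine Real.sInf_nonneg fun q (hq : ρ ≤ _) => le_of_not_gt fun hq0 => hq.not_gt ?_
  rwa [measure_mono_null (Iic_subset_Iio.2 hq0) h0, ENNReal.toReal_zero]

end Quantile

section Newsvendor

variable {b h : ℝ} {F : Measure ℝ}

lemma critical_ratio_mem_Ioo (hb : 0 < b) (hh : 0 < h) : b / (b + h) ∈ Ioo 0 1 :=
  ⟨by positivity, (div_lt_one (by positivity)).2 (by linarith)⟩

noncomputable def nvLoss (b h q x : ℝ) : ℝ := b * max (x - q) 0 + h * max (q - x) 0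

lemma nvCost_eq_integral_nvLoss (q : ℝ) : nvCost b h F q = ∫ x, nvLoss b h q x ∂F := rfl

lemma integrable_nvLoss [IsFiniteMeasure F] (hF : Integrable id F) (q : ℝ) :
    Integrable (nvLoss b h q) F :=
  (((hF.sub (integrable_const q)).sup (integrable_const 0)).const_mul b).add
    ((((integrable_const q).sub hF).sup (integrable_const 0)).const_mul h)

lemma nvLoss_sub_ge (hb : 0 ≤ b) (hh : 0 ≤ h) {r : ℝ} {s : Set ℝ} (hs₁ : Iio r ⊆ s)
    (hs₂ : s ⊆ Iic r) (q x : ℝ) :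
    (s.indicator (fun _ => b + h) x - b) * (q - r) ≤ nvLoss b h q x - nvLoss b h r x := by
  by_cases hx : x ∈ s
  · have hxr : x ≤ r := hs₂ hx
    rw [indicator_of_mem hx]
    rcases le_total x q with hxq | hxq <;>
      simp only [nvLoss, max_eq_left, max_eq_right, sub_nonneg, sub_nonpos, hxq, hxr] <;>
      nlinarith
  · have hrx : r ≤ x := not_lt.1 fun hxr => hx (hs₁ hxr)
    rw [indicator_of_notMem hx]
    rcases le_total x q with hxq | hxq <;>
      simp only [nvLoss, max_eq_left, max_eq_right, sub_nonneg, sub_nonpos, hxq, hrx] <;>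
      nlinarith

lemma integral_indicator_sub_const [IsProbabilityMeasure F] {s : Set ℝ} (hs : MeasurableSet s)
    (c d : ℝ) : ∫ x, (s.indicator (fun _ => c) x - d) ∂F = c * F.real s - d := by
  rw [integral_sub ((integrable_const c).indicator hs) (integrable_const d),
    integral_indicator_const c hs, integral_const, probReal_univ, smul_eq_mul, smul_eq_mul,
    one_mul, mul_comm]

variable [IsProbabilityMeasure F]

lemma nvCost_sub_ge (hb : 0 ≤ b) (hh : 0 ≤ h) (hF : Integrable id F) {r : ℝ} {s : Set ℝ}
    (hs : MeasurableSet s) (hs₁ : Iio r ⊆ s) (hs₂ : s ⊆ Iic r) (q : ℝ) :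
    ((b + h) * F.real s - b) * (q - r) ≤ nvCost b h F q - nvCost b h F r := by
  rw [← integral_indicator_sub_const hs, ← integral_mul_const, nvCost_eq_integral_nvLoss,
    nvCost_eq_integral_nvLoss, ← integral_sub (integrable_nvLoss hF q) (integrable_nvLoss hF r)]
  exact integral_mono
    ((((integrable_const _).indicator hs).sub (integrable_const b)).mul_const _)
    ((integrable_nvLoss hF q).sub (integrable_nvLoss hF r)) (nvLoss_sub_ge hb hh hs₁ hs₂ q)

lemma nvCost_sub_le (hb : 0 ≤ b) (hh : 0 ≤ h) (hF : Integrable id F) (q r : ℝ) :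
    nvCost b h F q - nvCost b h F r ≤ (b + h) * |q - r| := by
  have hsub := nvCost_sub_ge hb hh hF measurableSet_Iic Iio_subset_Iic_self subset_rfl r
    (r := q)
  have hp₀ : 0 ≤ F.real (Iic q) := measureReal_nonneg
  have hp₁ : F.real (Iic q) ≤ 1 := measureReal_le_one
  have hcoef : |(b + h) * F.real (Iic q) - b| ≤ b + h := abs_le.2 ⟨by nlinarith, by nlinarith⟩
  calc nvCost b h F q - nvCost b h F r ≤ ((b + h) * F.real (Iic q) - b) * (q - r) := by
        linarith
    _ ≤ |(b + h) * F.real (Iic q) - b| * |q - r| := by rw [← abs_mul]; exact le_abs_self _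
    _ ≤ (b + h) * |q - r| := by gcongr

theorem nvCost_qStar_le (hb : 0 < b) (hh : 0 < h) (hF : Integrable id F) (q : ℝ) :
    nvCost b h F (qStar (b / (b + h)) F) ≤ nvCost b h F q := by
  obtain ⟨hρ0, hρ1⟩ := critical_ratio_mem_Ioo hb hh
  have hρ : (b + h) * (b / (b + h)) = b := by field_simp
  set r := qStar (b / (b + h)) F
  rw [← sub_nonneg]
  rcases le_total r q with hrq | hqr
  · have hcdf : b / (b + h) ≤ F.real (Iic r) := by
      rw [← cdf_eq_real]; exact (qStar_le_iff hρ0 hρ1).1 le_rfl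
    refine (mul_nonneg ?_ (sub_nonneg.2 hrq)).trans
      (nvCost_sub_ge hb.le hh.le hF measurableSet_Iic Iio_subset_Iic_self subset_rfl q)
    nlinarith
  · have hcdf : F.real (Iio r) ≤ b / (b + h) := measureReal_Iio_qStar_le hρ0 hρ1
    refine (mul_nonneg_of_nonpos_of_nonpos ?_ (sub_nonpos.2 hqr)).trans
      (nvCost_sub_ge hb.le hh.le hF measurableSet_Iio subset_rfl Iio_subset_Iic_self q)
    nlinarith

end Newsvendor

section TailAtom

variable {ρ M lam a : ℝ} {G : Measure ℝ}

/-- In the notation of `Fp`, this is `Fp G lam a 0`. -/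
noncomputable def tailAtom (G : Measure ℝ) (lam a : ℝ) : Measure ℝ :=
  G.restrict (Iio lam) + (1 - G (Iio lam)) • Measure.dirac a

lemma tailAtom_apply {s : Set ℝ} (hs : MeasurableSet s) :
    tailAtom G lam a s = G (s ∩ Iio lam) + (1 - G (Iio lam)) * s.indicator 1 a := by
  simp [tailAtom, Measure.restrict_apply hs, Measure.dirac_apply' _ hs]

lemma tailAtom_apply_of_notMem {s : Set ℝ} (hs : MeasurableSet s) (ha : a ∉ s) :
    tailAtom G lam a s = G (s ∩ Iio lam) := by
  rw [tailAtom_apply hs, indicator_of_notMem ha, mul_zero, add_zero]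

lemma tailAtom_apply_of_mem [IsProbabilityMeasure G] {s : Set ℝ} (hs : MeasurableSet s)
    (hlam : Iio lam ⊆ s) (ha : a ∈ s) : tailAtom G lam a s = 1 := by
  rw [tailAtom_apply hs, inter_eq_right.2 hlam, indicator_of_mem ha, Pi.one_apply, mul_one,
    add_tsub_cancel_of_le prob_le_one]

instance [IsProbabilityMeasure G] : IsProbabilityMeasure (tailAtom G lam a) :=
  ⟨tailAtom_apply_of_mem MeasurableSet.univ (subset_univ _) (mem_univ a)⟩

lemma integrable_id_tailAtom (hG : Integrable id G) : Integrable id (tailAtom G lam a) :=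
  hG.restrict.add_measure <| Integrable.smul_measure
    ((integrable_const a).congr (ae_eq_dirac id).symm) (by simp)

lemma measureReal_tailAtom_Iio_self (hla : lam ≤ a) :
    (tailAtom G lam a).real (Iio a) = G.real (Iio lam) := by
  rw [measureReal_def, tailAtom_apply_of_notMem measurableSet_Iio (lt_irrefl a),
    inter_eq_right.2 (Iio_subset_Iio hla), measureReal_def]

lemma measureReal_tailAtom_Iic_self [IsProbabilityMeasure G] (hla : lam ≤ a) :
    (tailAtom G lam a).real (Iic a) = 1 := by
  rw [measureReal_def, tailAtom_apply_of_mem measurableSet_Iic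
    (Iio_subset_Iic_self.trans (Iic_subset_Iic.2 hla)) self_mem_Iic, ENNReal.toReal_one]

lemma qStar_tailAtom [IsProbabilityMeasure G] (hρ0 : 0 < ρ) (hρ1 : ρ < 1) (hla : lam ≤ a)
    (hγ : G.real (Iio lam) < ρ) : qStar ρ (tailAtom G lam a) = a := by
  refine le_antisymm ((qStar_le_iff hρ0 hρ1).2 ?_) (le_qStar_of_measureReal_Iio_lt hρ0 hρ1 ?_)
  · rw [cdf_eq_real, measureReal_tailAtom_Iic_self hla]; exact hρ1.le
  · rwa [measureReal_tailAtom_Iio_self hla]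

lemma tailAtom_mem_Ambig (hρ0 : 0 < ρ) (hρ1 : ρ < 1) (hG : G ∈ GoodDist ρ M) (hlam : 0 ≤ lam)
    (hla : lam ≤ a) (haM : a ≤ M) : tailAtom G lam a ∈ Ambig ρ M G lam := by
  obtain ⟨hprob, h0, hint, -⟩ := hG
  refine ⟨⟨inferInstance, ?_, integrable_id_tailAtom hint, ?_⟩, fun x hx => ?_⟩
  · rw [tailAtom_apply_of_notMem measurableSet_Iio (not_lt.2 (hlam.trans hla))]
    exact measure_mono_null inter_subset_left h0
  · rw [qStar_le_iff hρ0 hρ1, cdf_eq_real, measureReal_def, tailAtom_apply_of_mem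
      measurableSet_Iic (Iio_subset_Iic_self.trans (Iic_subset_Iic.2 (hla.trans haM))) haM]
    simpa using hρ1.le
  · rw [tailAtom_apply_of_notMem measurableSet_Iic (not_le.2 (hx.trans_le hla)),
      inter_eq_left.2 (Iic_subset_Iio.2 hx)]

end TailAtom

section Ambiguity

variable {ρ M lam : ℝ} {F G : Measure ℝ} [IsProbabilityMeasure G]

lemma cdf_eq_of_mem_Ambig (hF : F ∈ Ambig ρ M G lam) {x : ℝ} (hx : x < lam) :
    cdf F x = cdf G x := by
  have := hF.1.1
  rw [cdf_eq_real, cdf_eq_real, measureReal_def, measureReal_def, hF.2 x hx]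

lemma qStar_eq_of_mem_Ambig (hρ0 : 0 < ρ) (hρ1 : ρ < 1) (hF : F ∈ Ambig ρ M G lam)
    (hG : qStar ρ G < lam) : qStar ρ F = qStar ρ G := by
  have := hF.1.1
  have hiff : ∀ y < lam, qStar ρ F ≤ y ↔ qStar ρ G ≤ y := fun y hy => by
    rw [qStar_le_iff hρ0 hρ1, qStar_le_iff hρ0 hρ1, cdf_eq_of_mem_Ambig hF hy]
  have hFG : qStar ρ F ≤ qStar ρ G := (hiff _ hG).2 le_rfl
  exact le_antisymm hFG ((hiff _ (hFG.trans_lt hG)).1 le_rfl)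

lemma le_qStar_of_mem_Ambig (hρ0 : 0 < ρ) (hρ1 : ρ < 1) (hF : F ∈ Ambig ρ M G lam)
    (hG : lam ≤ qStar ρ G) : lam ≤ qStar ρ F := by
  have := hF.1.1
  refine le_of_forall_lt fun y hy => (lt_qStar_iff hρ0 hρ1).2 ?_
  rw [cdf_eq_of_mem_Ambig hF hy]
  exact (lt_qStar_iff hρ0 hρ1).1 (hy.trans_le hG)

lemma qStar_le_of_mem_Ambig (hρ0 : 0 < ρ) (hρ1 : ρ < 1) (hF : F ∈ Ambig ρ M G lam)
    (hγ : ρ ≤ G.real (Iio lam)) : qStar ρ F ≤ lam := by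
  have := hF.1.1
  have hIio : F.real (Iio lam) = G.real (Iio lam) :=
    measureReal_Iio_eq_of_cdf_eq fun x hx => cdf_eq_of_mem_Ambig hF hx
  rw [qStar_le_iff hρ0 hρ1, cdf_eq_real]
  exact (hγ.trans hIio.ge).trans (measureReal_mono Iio_subset_Iic_self)

end Ambiguity

section Regret

variable {b h ρ M lam q : ℝ} {G : Measure ℝ}

lemma bddAbove_regret (hb : 0 ≤ b) (hh : 0 ≤ h) (hρ0 : 0 < ρ) (hq : q ∈ Icc 0 M) :
    BddAbove ((fun F => nvCost b h F q - nvCost b h F (qStar ρ F)) '' Ambig ρ M G lam) := by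
  refine ⟨(b + h) * M, ?_⟩
  rintro _ ⟨F, ⟨⟨hprob, h0, hint, hFM⟩, -⟩, rfl⟩
  have hr := qStar_nonneg hρ0 h0
  refine (nvCost_sub_le hb hh hint q _).trans (mul_le_mul_of_nonneg_left ?_ (by linarith))
  exact abs_sub_le_iff.2 ⟨by linarith [hq.1, hq.2], by linarith [hq.1, hq.2]⟩

lemma sub_le_regret (hb : 0 ≤ b) (hh : 0 ≤ h) (hρ0 : 0 < ρ) (hq : q ∈ Icc 0 M)
    {F : Measure ℝ} (hF : F ∈ Ambig ρ M G lam) :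
    nvCost b h F q - nvCost b h F (qStar ρ F) ≤ Regret b h ρ M G lam q :=
  le_csSup (bddAbove_regret hb hh hρ0 hq) ⟨F, hF, rfl⟩

lemma regret_nonneg (hb : 0 < b) (hh : 0 < h) (hρ : ρ = b / (b + h)) (hG : G ∈ GoodDist ρ M)
    (hq : q ∈ Icc 0 M) : 0 ≤ Regret b h ρ M G lam q := by
  have := hG.1
  refine (sub_nonneg.2 ?_).trans (sub_le_regret hb.le hh.le
    (hρ ▸ (critical_ratio_mem_Ioo hb hh).1) hq (F := G) ⟨hG, fun _ _ => rfl⟩)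
  exact hρ ▸ nvCost_qStar_le hb hh hG.2.2.1 q

lemma regret_eq_zero (hb : 0 < b) (hh : 0 < h) (hρ : ρ = b / (b + h)) (hG : G ∈ GoodDist ρ M)
    (hq : q ∈ Icc 0 M) (hconst : ∀ F ∈ Ambig ρ M G lam, qStar ρ F = q) :
    Regret b h ρ M G lam q = 0 := by
  refine le_antisymm (Real.sSup_nonpos ?_) (regret_nonneg hb hh hρ hG hq)
  rintro _ ⟨F, hF, rfl⟩
  simp [hconst F hF]

theorem risk_eq_zero (hb : 0 < b) (hh : 0 < h) (hρ : ρ = b / (b + h)) (hG : G ∈ GoodDist ρ M)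
    (hq : q ∈ Icc 0 M) (hconst : ∀ F ∈ Ambig ρ M G lam, qStar ρ F = q) :
    Risk b h ρ M G lam = 0 := by
  have hnonneg : ∀ r ∈ Regret b h ρ M G lam '' Icc 0 M, 0 ≤ r := by
    rintro _ ⟨q', hq', rfl⟩
    exact regret_nonneg hb hh hρ hG hq'
  exact le_antisymm (csInf_le ⟨0, hnonneg⟩ ⟨q, hq, regret_eq_zero hb hh hρ hG hq hconst⟩)
    (Real.sInf_nonneg hnonneg)

lemma mul_sub_le_regret_of_atom_at_lam (hb : 0 < b) (hh : 0 < h) (hρ : ρ = b / (b + h))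
    (hG : G ∈ GoodDist ρ M) (hlam : 0 ≤ lam) (hlM : lam ≤ M) (hγ : G.real (Iio lam) < ρ)
    (hq : q ∈ Icc 0 M) : h * (q - lam) ≤ Regret b h ρ M G lam q := by
  have := hG.1
  obtain ⟨hρ0, hρ1⟩ : ρ ∈ Ioo 0 1 := hρ ▸ critical_ratio_mem_Ioo hb hh
  refine le_trans ?_ (sub_le_regret hb.le hh.le hρ0 hq (tailAtom_mem_Ambig hρ0 hρ1 hG hlam
    le_rfl hlM))
  rw [qStar_tailAtom hρ0 hρ1 le_rfl hγ]
  have := nvCost_sub_ge (F := tailAtom G lam lam) (r := lam) hb.le hh.le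
    (integrable_id_tailAtom hG.2.2.1) measurableSet_Iic Iio_subset_Iic_self subset_rfl q
  rw [measureReal_tailAtom_Iic_self le_rfl] at this
  linarith

lemma mul_sub_le_regret_of_atom_at_M (hb : 0 < b) (hh : 0 < h) (hρ : ρ = b / (b + h))
    (hG : G ∈ GoodDist ρ M) (hlam : 0 ≤ lam) (hlM : lam ≤ M) (hγ : G.real (Iio lam) < ρ)
    (hq : q ∈ Icc 0 M) : (b - (b + h) * G.real (Iio lam)) * (M - q) ≤ Regret b h ρ M G lam q := by
  have := hG.1
  obtain ⟨hρ0, hρ1⟩ : ρ ∈ Ioo 0 1 := hρ ▸ critical_ratio_mem_Ioo hb hh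
  refine le_trans ?_ (sub_le_regret hb.le hh.le hρ0 hq (tailAtom_mem_Ambig hρ0 hρ1 hG hlam
    hlM le_rfl))
  rw [qStar_tailAtom hρ0 hρ1 hlM hγ]
  have := nvCost_sub_ge (F := tailAtom G lam M) (r := M) hb.le hh.le
    (integrable_id_tailAtom hG.2.2.1) measurableSet_Iio subset_rfl Iio_subset_Iic_self q
  rw [measureReal_tailAtom_Iio_self hlM] at this
  linarith

theorem risk_pos (hb : 0 < b) (hh : 0 < h) (hρ : ρ = b / (b + h)) (hG : G ∈ GoodDist ρ M)
    (hlam : 0 ≤ lam) (hlM : lam < M) (hγ : G.real (Iio lam) < ρ) :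
    0 < Risk b h ρ M G lam := by
  set κ := b - (b + h) * G.real (Iio lam)
  have hκ : 0 < κ := by
    have : (b + h) * ρ = b := by rw [hρ]; field_simp
    nlinarith
  have hlow : min h κ * (M - lam) / 2 ≤ Risk b h ρ M G lam := by
    refine le_csInf ((nonempty_Icc.2 (hlam.trans hlM.le)).image _) ?_
    rintro _ ⟨q, hq, rfl⟩
    have hatLam := mul_sub_le_regret_of_atom_at_lam hb hh hρ hG hlam hlM.le hγ hq
    have hatM := mul_sub_le_regret_of_atom_at_M hb hh hρ hG hlam hlM.le hγ hq
    rcases le_total q ((lam + M) / 2) with hmid | hmid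
    · nlinarith [min_le_right h κ]
    · nlinarith [min_le_left h κ]
  exact (div_pos (mul_pos (lt_min hh hκ) (sub_pos.2 hlM)) two_pos).trans_le hlow

end Regret

theorem stmt2_general (b h M lam ρ : ℝ) (hb : 0 < b) (hh : 0 < h)
    (hlam : 0 ≤ lam) (hρ : ρ = b / (b + h))
    (G : Measure ℝ) (hG : G ∈ GoodDist ρ M) :
    Risk b h ρ M G lam = 0 ↔
      (ρ ≤ (G (Iio lam)).toReal ∨ ((G (Iio lam)).toReal < ρ ∧ lam = M)) := by
  have := hG.1
  obtain ⟨hρ0, hρ1⟩ : ρ ∈ Ioo 0 1 := hρ ▸ critical_ratio_mem_Ioo hb hh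
  change _ ↔ ρ ≤ G.real (Iio lam) ∨ (G.real (Iio lam) < ρ ∧ lam = M)
  constructor
  · intro hrisk
    by_contra! ⟨hγ, hne⟩
    have hlM : lam < M :=
      ((le_qStar_of_measureReal_Iio_lt hρ0 hρ1 hγ).trans hG.2.2.2).lt_of_ne (hne hγ)
    exact (risk_pos hb hh hρ hG hlam hlM hγ).ne' hrisk
  · intro hcases
    rcases lt_or_ge (qStar ρ G) lam with hlt | hle
    · exact risk_eq_zero hb hh hρ hG ⟨qStar_nonneg hρ0 hG.2.1, hG.2.2.2⟩
        fun F hF => qStar_eq_of_mem_Ambig hρ0 hρ1 hF hlt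
    · refine risk_eq_zero hb hh hρ hG ⟨hlam, hle.trans hG.2.2.2⟩
        fun F hF => le_antisymm ?_ (le_qStar_of_mem_Ambig hρ0 hρ1 hF hle)
      rcases hcases with hγ | ⟨-, rfl⟩
      · exact qStar_le_of_mem_Ambig hρ0 hρ1 hF hγ
      · exact hF.1.2.2.2

/-- `Δ = 0` iff `G⁻(λ) ≥ ρ`, or `G⁻(λ) < ρ` and `λ = M`. -/
theorem stmt2 (b h M lam ρ : ℝ) (hb : 0 < b) (hh : 0 < h) (hM : 0 < M)
    (hlam : 0 ≤ lam) (hρ : ρ = b / (b + h))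
    (G : Measure ℝ) (hG : G ∈ GoodDist ρ M) :
    Risk b h ρ M G lam = 0 ↔
      (ρ ≤ (G (Iio lam)).toReal ∨ ((G (Iio lam)).toReal < ρ ∧ lam = M)) :=
  stmt2_general b h M lam ρ hb hh hlam hρ G hG
end

section
/- Suppose G⁻(λ) ≥ ρ. Then for every q ∈ [0, M] the worst-case regret admits the following closed form: if q < λ, then Regret(q) = C_G(q) − C_G(q⋆_G); and if q ≥ λ, then Regret(q) = b·(q⋆_G − q) + (b+h)·( (q − λ) + E_G[(λ − D)·1{D < λ}] − E_G[(q⋆_G − D)·1{D ≤ q⋆_G}] ). -/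
open MeasureTheory Set

/-!
Every `F` in the ambiguity set agrees with `G` on `(-∞, λ)`, and since `G` already reaches level `ρ`
before `λ`, all of them share the quantile `q⋆_G`. Writing
`C_F(q) = b (E_F D - q) + (b + h) E_F (q - D)⁺`, the regret of `q` under `F` becomes
`(b + h) (E_F (q - D)⁺ - E_G (q⋆_G - D)⁺) - b (q - q⋆_G)`.
For `q < λ` the term `E_F (q - D)⁺` only sees `F` on `(-∞, λ)`, so the regret does not depend on `F`.
For `q ≥ λ`, `(q - D)⁺ ≤ (q - min D λ)⁺ = (λ - D)⁺ + (q - λ)`, with equality for the law of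
`min D λ` under `G`, which lies in the ambiguity set.
-/

section CdfBelow

variable {F G : Measure ℝ} {lam : ℝ}

lemma measure_Iio_eq_of_measure_Iic_eq (hFG : ∀ x < lam, F (Iic x) = G (Iic x)) :
    F (Iio lam) = G (Iio lam) := by
  have hlt : ∀ n : ℕ, lam - 1 / ((n : ℝ) + 1) < lam := fun n => by
    have : 0 < 1 / ((n : ℝ) + 1) := by positivity
    linarith
  have hmono : Monotone fun n : ℕ => Iic (lam - 1 / ((n : ℝ) + 1)) := fun m n hmn =>
    Iic_subset_Iic.2 (sub_le_sub_left (one_div_le_one_div_of_le (by positivity)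
      (by exact_mod_cast Nat.add_le_add_right hmn 1)) lam)
  have hunion : ⋃ n : ℕ, Iic (lam - 1 / ((n : ℝ) + 1)) = Iio lam :=
    iUnion_Iic_eq_Iio_of_lt_of_tendsto hlt
      (by simpa using tendsto_one_div_add_atTop_nhds_zero_nat.const_sub lam)
  rw [← hunion, hmono.measure_iUnion, hmono.measure_iUnion]
  exact iSup_congr fun n => hFG _ (hlt n)

lemma restrict_Iio_eq_of_measure_Iic_eq [IsFiniteMeasure F]
    (hFG : ∀ x < lam, F (Iic x) = G (Iic x)) :
    F.restrict (Iio lam) = G.restrict (Iio lam) := by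
  refine Measure.ext_of_Iic _ _ fun a => ?_
  rw [Measure.restrict_apply measurableSet_Iic, Measure.restrict_apply measurableSet_Iic]
  rcases lt_or_ge a lam with hal | hal
  · rw [inter_eq_left.2 (Iic_subset_Iio.2 hal)]
    exact hFG a hal
  · rw [inter_eq_right.2 (Iio_subset_Iic_self.trans (Iic_subset_Iic.2 hal))]
    exact measure_Iio_eq_of_measure_Iic_eq hFG

end CdfBelow

section Quantile

lemma csInf_le_csInf_of_forall_lt_mem {α : Type*} [ConditionallyCompleteLinearOrder α]
    {S T : Set α} {a : α} (hT : BddBelow T) (haS : a ∈ S) (haT : a ∈ T)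
    (h : ∀ x ∈ S, x < a → x ∈ T) : sInf T ≤ sInf S :=
  le_csInf ⟨a, haS⟩ fun x hx => (lt_or_ge x a).elim
    (fun hxa => csInf_le hT (h x hx hxa)) fun hax => (csInf_le hT haT).trans hax

variable {F G : Measure ℝ} {ρ lam : ℝ}

lemma bddBelow_setOf_le_measure_Iic (hρ : 0 < ρ) (hF : F (Iio 0) = 0) :
    BddBelow {q : ℝ | ρ ≤ (F (Iic q)).toReal} := by
  refine ⟨0, fun z hz => not_lt.1 fun hz0 => ?_⟩
  have : F (Iic z) = 0 := measure_mono_null (Iic_subset_Iio.2 hz0) hF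
  simp only [mem_ofPred_eq, this, ENNReal.toReal_zero] at hz
  linarith

lemma qStar_le_of_le_measure_Iio [IsFiniteMeasure G] (hρ : 0 < ρ) (hG0 : G (Iio 0) = 0)
    (hcen : ρ ≤ (G (Iio lam)).toReal) : qStar ρ G ≤ lam :=
  csInf_le (bddBelow_setOf_le_measure_Iic hρ hG0)
    (hcen.trans (ENNReal.toReal_mono (measure_ne_top G _) (measure_mono Iio_subset_Iic_self)))

lemma qStar_eq_of_measure_Iic_eq [IsFiniteMeasure F] [IsFiniteMeasure G] (hρ : 0 < ρ)
    (hF0 : F (Iio 0) = 0) (hG0 : G (Iio 0) = 0) (hcen : ρ ≤ (G (Iio lam)).toReal)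
    (hFG : ∀ x < lam, F (Iic x) = G (Iic x)) : qStar ρ F = qStar ρ G := by
  have hF : ρ ≤ (F (Iic lam)).toReal := by
    rw [← measure_Iio_eq_of_measure_Iic_eq hFG] at hcen
    exact hcen.trans (ENNReal.toReal_mono (measure_ne_top F _) (measure_mono Iio_subset_Iic_self))
  have hG : ρ ≤ (G (Iic lam)).toReal :=
    hcen.trans (ENNReal.toReal_mono (measure_ne_top G _) (measure_mono Iio_subset_Iic_self))
  refine le_antisymm ?_ ?_ <;>
    refine csInf_le_csInf_of_forall_lt_mem (bddBelow_setOf_le_measure_Iic hρ ‹_›) ‹_› ‹_›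
      fun x hx hxl => ?_
  · rwa [mem_ofPred_eq, hFG x hxl]
  · rwa [mem_ofPred_eq, ← hFG x hxl]

end Quantile

section Overage

variable {μ ν : Measure ℝ} {t lam q : ℝ}

lemma integrable_max_sub [IsFiniteMeasure μ] (hμ : Integrable id μ) (t : ℝ) :
    Integrable (fun x => max (t - x) 0) μ :=
  ((integrable_const t).sub hμ).pos_part

lemma integral_max_sub_eq_setIntegral {s : Set ℝ} (hs : MeasurableSet s) (hts : Iio t ⊆ s)
    (hst : s ⊆ Iic t) : ∫ x, max (t - x) 0 ∂μ = ∫ x in s, (t - x) ∂μ := by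
  rw [← setIntegral_eq_integral_of_forall_compl_eq_zero fun x hx =>
    max_eq_right (sub_nonpos.2 (not_lt.1 fun hxt => hx (hts hxt)))]
  exact setIntegral_congr_fun hs fun x hx => max_eq_left (sub_nonneg.2 (hst hx))

lemma integral_max_sub_eq_of_restrict_Iio_eq (ht : t ≤ lam)
    (hμν : μ.restrict (Iio lam) = ν.restrict (Iio lam)) :
    ∫ x, max (t - x) 0 ∂μ = ∫ x, max (t - x) 0 ∂ν := by
  have hvanish : ∀ x ∉ Iio lam, max (t - x) 0 = 0 := fun x hx =>
    max_eq_right (by rw [mem_Iio, not_lt] at hx; linarith)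
  rw [← setIntegral_eq_integral_of_forall_compl_eq_zero (μ := μ) hvanish,
    ← setIntegral_eq_integral_of_forall_compl_eq_zero (μ := ν) hvanish, hμν]

lemma max_sub_min_eq (hq : lam ≤ q) (x : ℝ) :
    max (q - min x lam) 0 = max (lam - x) 0 + (q - lam) := by
  rcases le_total x lam with hx | hx
  · rw [min_eq_left hx, max_eq_left (by linarith), max_eq_left (by linarith)]; ring
  · rw [min_eq_right hx, max_eq_left (by linarith), max_eq_right (by linarith)]; ring

lemma integral_max_sub_min_eq [IsProbabilityMeasure μ] (hμ : Integrable id μ) (hq : lam ≤ q) :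
    ∫ x, max (q - min x lam) 0 ∂μ = ∫ x, max (lam - x) 0 ∂μ + (q - lam) := by
  simp_rw [max_sub_min_eq hq]
  rw [integral_add (integrable_max_sub hμ lam) (integrable_const _), integral_const,
    probReal_univ, one_smul]

lemma integral_max_sub_le [IsProbabilityMeasure μ] (hμ : Integrable id μ) (hq : lam ≤ q) :
    ∫ x, max (q - x) 0 ∂μ ≤ ∫ x, max (lam - x) 0 ∂μ + (q - lam) := by
  rw [← integral_max_sub_min_eq hμ hq]
  refine integral_mono (integrable_max_sub hμ q) ?_ fun x => ?_
  · simp_rw [max_sub_min_eq hq]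
    exact (integrable_max_sub hμ lam).add (integrable_const _)
  · exact max_le_max_right 0 (sub_le_sub_left (min_le_left x lam) q)

lemma integral_max_sub_map_min [IsProbabilityMeasure μ] (hμ : Integrable id μ) (hq : lam ≤ q) :
    ∫ x, max (q - x) 0 ∂(μ.map (min · lam)) = ∫ x, max (lam - x) 0 ∂μ + (q - lam) := by
  rw [integral_map (by fun_prop) (by fun_prop)]
  exact integral_max_sub_min_eq hμ hq

end Overage

lemma nvCost_eq {F : Measure ℝ} [IsProbabilityMeasure F] (hF : Integrable id F) (b h q : ℝ) :
    nvCost b h F q = b * (∫ x, x ∂F - q) + (b + h) * ∫ x, max (q - x) 0 ∂F := by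
  have hpt : ∀ x : ℝ, b * max (x - q) 0 + h * max (q - x) 0
      = b * (x - q) + (b + h) * max (q - x) 0 := fun x => by
    rcases le_total x q with hx | hx
    · rw [max_eq_right (by linarith), max_eq_left (by linarith)]; ring
    · rw [max_eq_left (by linarith), max_eq_right (by linarith)]; ring
  have hid : Integrable (fun x : ℝ => x) F := hF
  have hlin : Integrable (fun x => b * (x - q)) F := (hid.sub (integrable_const q)).const_mul b
  rw [nvCost, funext hpt, integral_add hlin ((integrable_max_sub hF q).const_mul _),
    integral_const_mul, integral_const_mul,
    integral_sub hid (integrable_const q), integral_const, probReal_univ, one_smul]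

section Ambiguity

variable {b h ρ M lam q : ℝ} {F G : Measure ℝ}

lemma self_mem_ambig (hG : G ∈ GoodDist ρ M) : G ∈ Ambig ρ M G lam :=
  ⟨hG, fun _ _ => rfl⟩

lemma map_min_mem_ambig (hρ : 0 < ρ) (hlam : 0 ≤ lam) (hG : G ∈ GoodDist ρ M)
    (hcen : ρ ≤ (G (Iio lam)).toReal) : G.map (min · lam) ∈ Ambig ρ M G lam := by
  obtain ⟨hGprob, hG0, hGint, hGM⟩ := hG
  have hmeas : Measurable (min · lam : ℝ → ℝ) := by fun_prop
  have hpre : ∀ x < lam, (min · lam) ⁻¹' Iic x = Iic x := fun x hx => by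
    ext y
    simp [not_le.2 hx]
  have hFG : ∀ x < lam, G.map (min · lam) (Iic x) = G (Iic x) := fun x hx => by
    rw [Measure.map_apply hmeas measurableSet_Iic, hpre x hx]
  have hF0 : G.map (min · lam) (Iio 0) = 0 := by
    rw [Measure.map_apply hmeas measurableSet_Iio]
    convert hG0 using 2
    ext y
    simp [not_lt.2 hlam]
  have hprob := Measure.isProbabilityMeasure_map (μ := G) hmeas.aemeasurable
  refine ⟨⟨hprob, hF0, ?_, ?_⟩, hFG⟩
  · rw [integrable_map_measure (by fun_prop) hmeas.aemeasurable]
    exact hGint.inf (integrable_const lam)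
  · rwa [qStar_eq_of_measure_Iic_eq hρ hF0 hG0 hcen hFG]

lemma nvCost_sub_nvCost_qStar_of_mem_ambig (hρ : 0 < ρ) (hG : G ∈ GoodDist ρ M)
    (hcen : ρ ≤ (G (Iio lam)).toReal) (hF : F ∈ Ambig ρ M G lam) :
    nvCost b h F q - nvCost b h F (qStar ρ F) = (b + h) * (∫ x, max (q - x) 0 ∂F
      - ∫ x, max (qStar ρ G - x) 0 ∂G) - b * (q - qStar ρ G) := by
  obtain ⟨⟨hFprob, hF0, hFint, -⟩, hFG⟩ := hF
  obtain ⟨hGprob, hG0, -, -⟩ := hG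
  rw [nvCost_eq hFint, nvCost_eq hFint, qStar_eq_of_measure_Iic_eq hρ hF0 hG0 hcen hFG,
    integral_max_sub_eq_of_restrict_Iio_eq (qStar_le_of_le_measure_Iio hρ hG0 hcen)
      (restrict_Iio_eq_of_measure_Iic_eq hFG)]
  ring

lemma regret_eq_of_forall_le {F₀ : Measure ℝ} (hF₀ : F₀ ∈ Ambig ρ M G lam)
    (hle : ∀ F ∈ Ambig ρ M G lam, nvCost b h F q - nvCost b h F (qStar ρ F)
      ≤ nvCost b h F₀ q - nvCost b h F₀ (qStar ρ F₀)) :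
    Regret b h ρ M G lam q = nvCost b h F₀ q - nvCost b h F₀ (qStar ρ F₀) :=
  IsGreatest.csSup_eq ⟨mem_image_of_mem _ hF₀, forall_mem_image.2 hle⟩

end Ambiguity

theorem stmt6_general (b h M lam ρ : ℝ) (hb : 0 < b) (hh : 0 < h)
    (hlam : 0 ≤ lam) (hρ : ρ = b / (b + h))
    (G : Measure ℝ) (hG : G ∈ GoodDist ρ M)
    (hcen : ρ ≤ (G (Iio lam)).toReal)
    (q : ℝ) :
    (q < lam →
      Regret b h ρ M G lam q = nvCost b h G q - nvCost b h G (qStar ρ G)) ∧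
    (lam ≤ q →
      Regret b h ρ M G lam q =
        b * (qStar ρ G - q) + (b + h) *
          ((q - lam) + (∫ x in Iio lam, (lam - x) ∂G)
            - ∫ x in Iic (qStar ρ G), (qStar ρ G - x) ∂G)) := by
  have hbh : 0 < b + h := add_pos hb hh
  have hρ0 : 0 < ρ := hρ ▸ div_pos hb hbh
  have hregret := fun F (hF : F ∈ Ambig ρ M G lam) =>
    nvCost_sub_nvCost_qStar_of_mem_ambig (b := b) (h := h) (q := q) hρ0 hG hcen hF
  have ⟨hGprob, _, hGint, _⟩ := hG
  refine ⟨fun hql => regret_eq_of_forall_le (self_mem_ambig hG) fun F hF => le_of_eq ?_,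
    fun hql => ?_⟩
  · have := hF.1.1
    rw [hregret F hF, hregret G (self_mem_ambig hG),
      integral_max_sub_eq_of_restrict_Iio_eq hql.le (restrict_Iio_eq_of_measure_Iic_eq hF.2)]
  have hF₀ := map_min_mem_ambig hρ0 hlam hG hcen
  have hworst : ∀ F ∈ Ambig ρ M G lam,
      ∫ x, max (q - x) 0 ∂F ≤ ∫ x, max (q - x) 0 ∂(G.map (min · lam)) := fun F hF => by
    obtain ⟨⟨hFprob, -, hFint, -⟩, hFG⟩ := hF
    rw [integral_max_sub_map_min hGint hql, ← integral_max_sub_eq_of_restrict_Iio_eq le_rfl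
      (restrict_Iio_eq_of_measure_Iic_eq hFG)]
    exact integral_max_sub_le hFint hql
  rw [regret_eq_of_forall_le hF₀ fun F hF => ?_, hregret _ hF₀, integral_max_sub_map_min hGint hql,
    integral_max_sub_eq_setIntegral measurableSet_Iio subset_rfl Iio_subset_Iic_self,
    integral_max_sub_eq_setIntegral measurableSet_Iic Iio_subset_Iic_self subset_rfl]
  · ring
  · rw [hregret F hF, hregret _ hF₀]
    linarith [mul_le_mul_of_nonneg_left (hworst F hF) hbh.le]

/-- closed form for the worst-case regret in the identifiable
regime `G⁻(λ) ≥ ρ`. -/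
theorem stmt6 (b h M lam ρ : ℝ) (hb : 0 < b) (hh : 0 < h) (hM : 0 < M)
    (hlam : 0 ≤ lam) (hρ : ρ = b / (b + h))
    (G : Measure ℝ) (hG : G ∈ GoodDist ρ M)
    (hcen : ρ ≤ (G (Iio lam)).toReal)
    (q : ℝ) (hq : q ∈ Icc (0 : ℝ) M) :
    (q < lam →
      Regret b h ρ M G lam q = nvCost b h G q - nvCost b h G (qStar ρ G)) ∧
    (lam ≤ q →
      Regret b h ρ M G lam q =
        b * (qStar ρ G - q) + (b + h) *
          ((q - lam) + (∫ x in Iio lam, (lam - x) ∂G)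
            - ∫ x in Iic (qStar ρ G), (qStar ρ G - x) ∂G)) :=
  stmt6_general b h M lam ρ hb hh hlam hρ G hG hcen q
end

section
/- Fix δ ∈ (0,1) and suppose G⁻(λ) ≥ ρ. Let D_1, …, D_N be i.i.d. samples from G, let Ĝᵘᶜ(x) = (1/N)·Σ_{i=1}^N 1{D_i ≤ x} be the empirical cumulative distribution function, and let q̂ = inf{x ∈ ℝ : Ĝᵘᶜ(x) ≥ ρ} be the sample ρ-th quantile. Then with probability at least 1 − δ, the following implication holds: if (1/N)·Σ_{i=1}^N 1{D_i < λ} ≥ ρ, then C_G(q̂) − C_G(q⋆_G) ≤ λ·(b+h)·√(log(2/δ)/(2N)). -/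
/-!
Write `Φ` for the CDF of `G` and `q⋆` for its `ρ`-quantile. The newsvendor cost has derivative
`(b + h) Φ - b = (b + h) (Φ - ρ)`, so `C(q̂) - C(q⋆) ≤ (b + h) ε |q̂ - q⋆|` as soon as `|Φ - ρ| ≤ ε`
strictly between `q̂` and `q⋆`. That can only fail if the empirical CDF misjudges on which side of
`ρ` the `(ρ + ε)`- or the `(ρ - ε)`-quantile of `G` lies; by Hoeffding's inequality each of these
has probability at most `exp (-2 N ε²) = δ / 2`. Finally the empirical condition puts `q̂` in
`[0, λ]`, and `G⁻(λ) ≥ ρ` puts `q⋆` there too, so `|q̂ - q⋆| ≤ λ`.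
-/

open MeasureTheory Set

open ProbabilityTheory Filter

theorem measure_pi_sum_indicator_ge_le {α : Type*} [MeasurableSpace α] (μ : Measure α)
    [IsProbabilityMeasure μ] (N : ℕ) {A : Set α} (hA : MeasurableSet A) {r ε : ℝ}
    (hε : 0 ≤ ε) (hr : μ.real A + ε ≤ r) :
    Measure.pi (fun _ : Fin N => μ) {d | r * N ≤ ∑ i, A.indicator 1 (d i)} ≤
      ENNReal.ofReal (Real.exp (-2 * N * ε ^ 2)) := by
  set P := Measure.pi fun _ : Fin N => μ
  set X : Fin N → (Fin N → α) → ℝ := fun i d => A.indicator 1 (d i) - μ.real A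
  have hmeas : Measurable (A.indicator (1 : α → ℝ)) := measurable_one.indicator hA
  have hindep : iIndepFun X P :=
    iIndepFun_pi (X := fun _ x => A.indicator (1 : α → ℝ) x - μ.real A)
      fun _ => (hmeas.sub_const _).aemeasurable
  have hsubG : ∀ i, HasSubgaussianMGF (X i) (1 / 4) P := by
    intro i
    have hmean : P[fun d => A.indicator (1 : α → ℝ) (d i)] = μ.real A := by
      rw [integral_comp_eval hmeas.aestronglyMeasurable, integral_indicator_one hA]
    convert hasSubgaussianMGF_of_mem_Icc (μ := P) (a := 0) (b := 1)
      (hmeas.comp (measurable_pi_apply i)).aemeasurable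
      (ae_of_all _ fun d => ⟨indicator_nonneg (fun _ _ => zero_le_one) _,
        indicator_le_self' (fun _ _ => zero_le_one) _⟩) using 1
    · simp [X, hmean]
    · norm_num
  have hoeff := HasSubgaussianMGF.measure_sum_ge_le_of_iIndepFun hindep (s := Finset.univ)
    (fun i _ => hsubG i) (mul_nonneg hε N.cast_nonneg)
  have hexp : -(ε * N) ^ 2 / (2 * ∑ _i : Fin N, (1 / 4 : NNReal)) = -2 * N * ε ^ 2 := by
    rcases eq_or_ne (N : ℝ) 0 with hN | hN
    · simp [hN]
    · rw [Finset.sum_const, Finset.card_univ, Fintype.card_fin, nsmul_eq_mul]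
      push_cast
      field_simp
      norm_num
  rw [hexp] at hoeff
  calc P {d | r * N ≤ ∑ i, A.indicator 1 (d i)} ≤ P {d | ε * N ≤ ∑ i, X i d} := by
        refine measure_mono fun d hd => ?_
        simp only [mem_ofPred_eq, X, Finset.sum_sub_distrib, Finset.sum_const, Finset.card_univ,
          Fintype.card_fin, nsmul_eq_mul] at hd ⊢
        nlinarith [N.cast_nonneg (α := ℝ)]
    _ = ENNReal.ofReal (P.real {d | ε * N ≤ ∑ i, X i d}) :=
        (ofReal_measureReal (measure_ne_top _ _)).symm
    _ ≤ _ := ENNReal.ofReal_le_ofReal hoeff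

theorem measureReal_Iio_le_of_forall_lt {μ : Measure ℝ} [IsFiniteMeasure μ] {a c : ℝ}
    (h : ∀ x < a, μ.real (Iic x) ≤ c) : μ.real (Iio a) ≤ c := by
  set x : ℕ → ℝ := fun n => a - 1 / (n + 1)
  have hx : ∀ n, x n < a := fun n => sub_lt_self a Nat.one_div_pos_of_nat
  have hlim : Tendsto x atTop (nhds a) := by
    simpa [x] using tendsto_one_div_add_atTop_nhds_zero_nat.const_sub a
  have hmono : Monotone fun n => Iic (x n) := fun m n hmn =>
    Iic_subset_Iic.2 (sub_le_sub_left (Nat.one_div_le_one_div hmn) a)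
  rw [← iUnion_Iic_eq_Iio_of_lt_of_tendsto hx hlim]
  exact le_of_tendsto' ((ENNReal.tendsto_toReal (measure_ne_top μ _)).comp
    (tendsto_measure_iUnion_atTop hmono)) fun n => h _ (hx n)

noncomputable def quantile (F : ℝ → ℝ) (c : ℝ) : ℝ := sInf {x | c ≤ F x}

section Quantile

variable {F : ℝ → ℝ} {c : ℝ}

theorem mem_lowerBounds_setOf_le_of_forall_lt {a : ℝ} (h : ∀ x < a, F x < c) :
    a ∈ lowerBounds {x | c ≤ F x} :=
  fun _ hx => not_lt.1 fun hxa => (h _ hxa).not_ge hx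

theorem bddBelow_setOf_le_of_eventually_lt (h : ∀ᶠ x in atBot, F x < c) :
    BddBelow {x | c ≤ F x} := by
  obtain ⟨a, ha⟩ := eventually_atBot.1 h
  exact ⟨a - 1, mem_lowerBounds_setOf_le_of_forall_lt fun x hx => ha x (by linarith)⟩

theorem quantile_mem_Icc {a b : ℝ} (ha : ∀ x < a, F x < c) (hb : c ≤ F b) :
    quantile F c ∈ Icc a b :=
  ⟨le_csInf ⟨b, hb⟩ (mem_lowerBounds_setOf_le_of_forall_lt ha),
    csInf_le ⟨a, mem_lowerBounds_setOf_le_of_forall_lt ha⟩ hb⟩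

theorem lt_of_lt_quantile (hbdd : BddBelow {x | c ≤ F x}) {t : ℝ} (ht : t < quantile F c) :
    F t < c :=
  not_le.1 fun h => (csInf_le hbdd h).not_gt ht

theorem le_of_quantile_lt (hF : Monotone F) (hne : ∃ x, c ≤ F x) {t : ℝ}
    (ht : quantile F c < t) : c ≤ F t := by
  obtain ⟨x, hx, hxt⟩ := exists_lt_of_csInf_lt hne ht
  exact le_trans hx (hF hxt.le)

theorem le_apply_quantile (f : StieltjesFunction ℝ) (hne : ∃ x, c ≤ f x)
    (hbdd : BddBelow {x | c ≤ f x}) : c ≤ f (quantile f c) :=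
  ContinuousWithinAt.closure_le (csInf_mem_closure hne hbdd) continuousWithinAt_const
    ((f.right_continuous _).mono fun _ hx => csInf_le hbdd hx) fun _ hx => hx

theorem abs_sub_le_of_mem_Ioo_min_max {ε q q' t : ℝ} (hq : ∀ s < q, F s < c)
    (hq' : ∀ s, q < s → c ≤ F s) (hU : ∀ s < q', F s < c + ε) (hL : ∀ s, q' < s → c - ε ≤ F s)
    (ht : t ∈ Ioo (min q q') (max q q')) : |F t - c| ≤ ε := by
  rw [abs_le]
  rcases le_total q q' with hqq | hqq
  · rw [min_eq_left hqq, max_eq_right hqq] at ht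
    constructor <;> linarith [hq' t ht.1, hU t ht.2]
  · rw [min_eq_right hqq, max_eq_left hqq] at ht
    constructor <;> linarith [hq t ht.2, hL t ht.1]

end Quantile

theorem qStar_eq_quantile_cdf (ρ : ℝ) (G : Measure ℝ) [IsProbabilityMeasure G] :
    qStar ρ G = quantile (cdf G) ρ := by
  simp only [qStar, quantile, cdf_eq_real, measureReal_def]

theorem max_sub_max_eq_intervalIntegral (x q₁ q₂ : ℝ) :
    max (q₂ - x) 0 - max (q₁ - x) 0 = ∫ t in q₁..q₂, (Iic t).indicator (1 : ℝ → ℝ) x := by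
  have hmono : Monotone fun t => (Iic t).indicator (1 : ℝ → ℝ) x := fun s t hst =>
    indicator_le_indicator_of_subset (Iic_subset_Iic.2 hst) (fun _ => zero_le_one) x
  refine (intervalIntegral.integral_eq_sub_of_hasDeriv_right (f := fun s => max (s - x) 0)
    (by fun_prop) (fun t _ => ?_) hmono.intervalIntegrable).symm
  by_cases hxt : x ≤ t
  · rw [indicator_of_mem (mem_Iic.2 hxt)]
    refine ((hasDerivAt_id t).sub_const x).hasDerivWithinAt.congr (fun s hs => ?_) ?_
    · simp [max_eq_left (by linarith [mem_Ioi.1 hs] : (0 : ℝ) ≤ s - x)]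
    · simp [hxt]
  · rw [indicator_of_notMem (by simpa using hxt)]
    refine ((hasDerivAt_const t (0 : ℝ)).congr_of_eventuallyEq ?_).hasDerivWithinAt
    filter_upwards [eventually_lt_nhds (not_le.1 hxt)] with s hs
    simp [hs.le]

theorem integral_max_sub_max (G : Measure ℝ) [IsProbabilityMeasure G] (q₁ q₂ : ℝ) :
    ∫ x, (max (q₂ - x) 0 - max (q₁ - x) 0) ∂G = ∫ t in q₁..q₂, cdf G t := by
  simp_rw [max_sub_max_eq_intervalIntegral]
  rw [← intervalIntegral_integral_swap]
  · congr 1 with t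
    rw [integral_indicator_one measurableSet_Iic, cdf_eq_real]
  · have : IsFiniteMeasure (volume.restrict (uIoc q₁ q₂)) :=
      isFiniteMeasure_restrict.2 measure_Ioc_lt_top.ne
    refine Integrable.of_bound ?_ 1 (ae_of_all _ fun p => ?_)
    · exact (measurable_one.indicator
        (measurableSet_le measurable_snd measurable_fst)).aestronglyMeasurable
    · exact (norm_indicator_le_norm_self _ _).trans (by simp)

theorem nvCost_sub_nvCost (b h : ℝ) (G : Measure ℝ) [IsProbabilityMeasure G]
    (hint : Integrable id G) (q₁ q₂ : ℝ) :
    nvCost b h G q₂ - nvCost b h G q₁ = ∫ t in q₁..q₂, ((b + h) * cdf G t - b) := by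
  have hpos : ∀ q, Integrable (fun x : ℝ => max (x - q) 0) G := fun q =>
    (hint.sub (integrable_const q)).pos_part
  have hneg : ∀ q, Integrable (fun x : ℝ => max (q - x) 0) G := fun q =>
    ((integrable_const q).sub hint).pos_part
  have hloss : ∀ q, Integrable (fun x => b * max (x - q) 0 + h * max (q - x) 0) G := fun q =>
    ((hpos q).const_mul b).add ((hneg q).const_mul h)
  have hsplit : ∀ x, (b * max (x - q₂) 0 + h * max (q₂ - x) 0)
      - (b * max (x - q₁) 0 + h * max (q₁ - x) 0)
      = (b + h) * (max (q₂ - x) 0 - max (q₁ - x) 0) - b * (q₂ - q₁) := by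
    intro x
    have hmax : ∀ a : ℝ, max a 0 = a + max (-a) 0 := fun a => by
      rcases le_total a 0 with ha | ha <;> simp [ha]
    rw [hmax (x - q₂), hmax (x - q₁), neg_sub, neg_sub]
    ring
  have hdiff : Integrable (fun x => (b + h) * (max (q₂ - x) 0 - max (q₁ - x) 0)) G :=
    ((hneg q₂).sub (hneg q₁)).const_mul _
  have hcdf : IntervalIntegrable (cdf G) volume q₁ q₂ := (monotone_cdf G).intervalIntegrable
  rw [nvCost, nvCost, ← integral_sub (hloss q₂) (hloss q₁)]
  simp_rw [hsplit]
  rw [integral_sub hdiff (integrable_const _), integral_const_mul, integral_max_sub_max,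
    intervalIntegral.integral_sub (hcdf.const_mul _) intervalIntegrable_const,
    intervalIntegral.integral_const_mul]
  simp [mul_comm]

theorem abs_nvCost_sub_le (b h : ℝ) (G : Measure ℝ) [IsProbabilityMeasure G]
    (hint : Integrable id G) {q₁ q₂ C : ℝ}
    (hC : ∀ t ∈ Ioo (min q₁ q₂) (max q₁ q₂), |(b + h) * cdf G t - b| ≤ C) :
    |nvCost b h G q₂ - nvCost b h G q₁| ≤ C * |q₂ - q₁| := by
  rw [nvCost_sub_nvCost b h G hint, ← Real.norm_eq_abs]
  refine intervalIntegral.norm_integral_le_of_norm_le_const_ae ?_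
  filter_upwards [compl_mem_ae_iff.2 (measure_singleton (μ := volume) (max q₁ q₂))] with t hne ht
  exact hC t ⟨ht.1, lt_of_le_of_ne ht.2 hne⟩

theorem nvCost_sub_nvCost_qStar_le {b h : ℝ} (hbh : 0 < b + h) (G : Measure ℝ)
    [IsProbabilityMeasure G] (hint : Integrable id G) {q ε : ℝ}
    (hbdd : BddBelow {x | b / (b + h) ≤ cdf G x}) (hne : ∃ x, b / (b + h) ≤ cdf G x)
    (hU : ∀ t < q, cdf G t < b / (b + h) + ε) (hL : ∀ t, q < t → b / (b + h) - ε ≤ cdf G t) :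
    nvCost b h G q - nvCost b h G (qStar (b / (b + h)) G) ≤
      (b + h) * ε * |q - qStar (b / (b + h)) G| := by
  rw [qStar_eq_quantile_cdf]
  refine (le_abs_self _).trans (abs_nvCost_sub_le b h G hint fun t ht => ?_)
  have hnear := abs_sub_le_of_mem_Ioo_min_max (fun s hs => lt_of_lt_quantile hbdd hs)
    (fun s hs => le_of_quantile_lt (monotone_cdf G) hne hs) hU hL ht
  calc |(b + h) * cdf G t - b| = (b + h) * |cdf G t - b / (b + h)| := by
        rw [← abs_of_pos hbh, ← abs_mul, abs_of_pos hbh, mul_sub, mul_div_cancel₀ _ hbh.ne']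
    _ ≤ (b + h) * ε := mul_le_mul_of_nonneg_left hnear hbh.le

noncomputable def empiricalCDF {N : ℕ} (d : Fin N → ℝ) (x : ℝ) : ℝ :=
  (1 / (N : ℝ)) * ∑ i, if d i ≤ x then (1 : ℝ) else 0

section EmpiricalCDF

variable {N : ℕ} (d : Fin N → ℝ)

theorem empiricalCDF_eq_sum_div (x : ℝ) :
    empiricalCDF d x = (∑ i, (Iic x).indicator 1 (d i)) / N := by
  simp [empiricalCDF, indicator_apply, div_eq_inv_mul]

theorem empiricalCDF_eq_zero {x : ℝ} (hx : ∀ i, x < d i) : empiricalCDF d x = 0 := by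
  simp [empiricalCDF, fun i => not_le.2 (hx i)]

theorem bddBelow_setOf_le_empiricalCDF {c : ℝ} (hc : 0 < c) :
    BddBelow {x | c ≤ empiricalCDF d x} := by
  obtain ⟨m, hm⟩ := (finite_range d).bddBelow
  refine bddBelow_setOf_le_of_eventually_lt ((eventually_lt_atBot m).mono fun x hx => ?_)
  rwa [empiricalCDF_eq_zero d fun i => hx.trans_le (hm (mem_range_self i))]

theorem exists_le_empiricalCDF (hN : 0 < N) {c : ℝ} (hc : c ≤ 1) :
    ∃ x, c ≤ empiricalCDF d x := by
  obtain ⟨M, hM⟩ := (finite_range d).bddAbove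
  have hone : ∀ i, d i ≤ M := fun i => hM (mem_range_self i)
  refine ⟨M, ?_⟩
  simpa [empiricalCDF, hone, hN.ne'] using hc

theorem quantile_empiricalCDF_mem_Icc (hd : ∀ i, 0 ≤ d i) {ρ lam : ℝ} (hρ : 0 < ρ)
    (hlam : ρ ≤ (1 / (N : ℝ)) * ∑ i, if d i < lam then (1 : ℝ) else 0) :
    quantile (empiricalCDF d) ρ ∈ Icc 0 lam :=
  quantile_mem_Icc (fun x hx => (empiricalCDF_eq_zero d fun i => hx.trans_le (hd i)).trans_lt hρ)
    (hlam.trans <| mul_le_mul_of_nonneg_left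
      (Finset.sum_le_sum fun i _ => by split_ifs <;> linarith) (by positivity))

end EmpiricalCDF

theorem measure_cdf_ge_before_empiricalQuantile_le (G : Measure ℝ) [IsProbabilityMeasure G]
    {N : ℕ} (hN : 0 < N) {ρ ε : ℝ} (hρ : 0 < ρ) (hε : 0 ≤ ε) :
    Measure.pi (fun _ : Fin N => G)
        {d | ∃ t < quantile (empiricalCDF d) ρ, ρ + ε ≤ cdf G t} ≤
      ENNReal.ofReal (Real.exp (-2 * N * ε ^ 2)) := by
  by_cases hne : ∃ x, ρ + ε ≤ cdf G x
  swap
  · simp only [not_exists, not_le] at hne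
    refine (measure_mono_null (fun d hd => ?_) measure_empty).trans_le zero_le
    obtain ⟨t, -, ht⟩ := hd
    exact ((hne t).not_ge ht).elim
  have hbdd : BddBelow {x | ρ + ε ≤ cdf G x} := bddBelow_setOf_le_of_eventually_lt
    ((tendsto_cdf_atBot G).eventually (gt_mem_nhds (by positivity)))
  set u := quantile (cdf G) (ρ + ε)
  have hu : G.real (Ioi u) + ε ≤ 1 - ρ := by
    have := le_apply_quantile (cdf G) hne hbdd
    rw [← compl_Iic, probReal_compl_eq_one_sub measurableSet_Iic, ← cdf_eq_real]
    linarith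
  refine (measure_mono fun d hd => ?_).trans
    (measure_pi_sum_indicator_ge_le G N measurableSet_Ioi hε hu)
  obtain ⟨t, htq, ht⟩ := hd
  have hlt : empiricalCDF d u < ρ :=
    lt_of_lt_quantile (bddBelow_setOf_le_empiricalCDF d hρ) ((csInf_le hbdd ht).trans_lt htq)
  rw [empiricalCDF_eq_sum_div, div_lt_iff₀ (by exact_mod_cast hN)] at hlt
  simp only [mem_ofPred_eq, ← compl_Iic, indicator_compl, Pi.sub_apply, Pi.one_apply,
    Finset.sum_sub_distrib, Finset.sum_const, Finset.card_univ, Fintype.card_fin, nsmul_eq_mul,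
    mul_one]
  linarith

theorem measure_cdf_lt_after_empiricalQuantile_le (G : Measure ℝ) [IsProbabilityMeasure G]
    {N : ℕ} (hN : 0 < N) {ρ ε : ℝ} (hρ : ρ < 1) (hε : 0 ≤ ε) :
    Measure.pi (fun _ : Fin N => G)
        {d | ∃ t, quantile (empiricalCDF d) ρ < t ∧ cdf G t < ρ - ε} ≤
      ENNReal.ofReal (Real.exp (-2 * N * ε ^ 2)) := by
  by_cases hpos : 0 < ρ - ε
  swap
  · have hge : ∀ t, ρ - ε ≤ cdf G t := fun t => (not_lt.1 hpos).trans (cdf_nonneg G t)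
    refine (measure_mono_null (fun d hd => ?_) measure_empty).trans_le zero_le
    obtain ⟨t, -, ht⟩ := hd
    exact ((hge t).not_gt ht).elim
  have hbdd : BddBelow {x | ρ - ε ≤ cdf G x} := bddBelow_setOf_le_of_eventually_lt
    ((tendsto_cdf_atBot G).eventually (gt_mem_nhds hpos))
  have hne : ∃ x, ρ - ε ≤ cdf G x :=
    ((tendsto_cdf_atTop G).eventually (lt_mem_nhds (by linarith))).exists.imp fun _ => le_of_lt
  set l := quantile (cdf G) (ρ - ε)
  have hl : G.real (Iio l) + ε ≤ ρ := by
    have := measureReal_Iio_le_of_forall_lt fun x hx =>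
      (cdf_eq_real G x ▸ (lt_of_lt_quantile hbdd hx).le)
    linarith
  refine (measure_mono fun d hd => ?_).trans
    (measure_pi_sum_indicator_ge_le G N measurableSet_Iio hε hl)
  obtain ⟨t, htq, ht⟩ := hd
  have htl : t ≤ l := not_lt.1 fun hlt => (le_of_quantile_lt (monotone_cdf G) hne hlt).not_gt ht
  obtain ⟨x, hx, hxl⟩ :=
    exists_lt_of_csInf_lt (exists_le_empiricalCDF d hN hρ.le) (htq.trans_le htl)
  change ρ ≤ empiricalCDF d x at hx
  rw [empiricalCDF_eq_sum_div, le_div_iff₀ (by exact_mod_cast hN)] at hx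
  refine hx.trans (Finset.sum_le_sum fun i _ => ?_)
  exact indicator_le_indicator_of_subset (Iic_subset_Iio.2 hxl) (fun _ => zero_le_one) _

theorem measure_compl_setOf_cdf_near_empiricalQuantile_le (G : Measure ℝ)
    [IsProbabilityMeasure G] (hsupp : G (Iio 0) = 0) {N : ℕ} (hN : 0 < N) {ρ ε : ℝ}
    (hρ0 : 0 < ρ) (hρ1 : ρ < 1) (hε : 0 ≤ ε) :
    Measure.pi (fun _ : Fin N => G)
        {d | (∀ i, 0 ≤ d i) ∧ (∀ t < quantile (empiricalCDF d) ρ, cdf G t < ρ + ε) ∧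
          ∀ t, quantile (empiricalCDF d) ρ < t → ρ - ε ≤ cdf G t}ᶜ ≤
      ENNReal.ofReal (2 * Real.exp (-2 * N * ε ^ 2)) := by
  set P := Measure.pi fun _ : Fin N => G
  set Bup := {d : Fin N → ℝ | ∃ t < quantile (empiricalCDF d) ρ, ρ + ε ≤ cdf G t}
  set Blow := {d : Fin N → ℝ | ∃ t, quantile (empiricalCDF d) ρ < t ∧ cdf G t < ρ - ε}
  set Bneg := ⋃ i : Fin N, Function.eval i ⁻¹' (Iio 0 : Set ℝ)
  calc P _ ≤ P (Bup ∪ Blow ∪ Bneg) := by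
        refine measure_mono (compl_subset_comm.1 fun d hd => ?_)
        simp only [Bup, Blow, Bneg, compl_union, compl_iUnion, mem_inter_iff, mem_compl_iff,
          mem_ofPred_eq, mem_iInter, mem_preimage, Function.eval, mem_Iio, not_exists, not_and,
          not_le, not_lt] at hd
        exact ⟨hd.2, hd.1.1, hd.1.2⟩
    _ ≤ P Bup + P Blow + P Bneg :=
        (measure_union_le _ _).trans (add_le_add_left (measure_union_le _ _) _)
    _ ≤ ENNReal.ofReal (Real.exp (-2 * N * ε ^ 2)) + ENNReal.ofReal (Real.exp (-2 * N * ε ^ 2))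
          + 0 := by
        gcongr
        · exact measure_cdf_ge_before_empiricalQuantile_le G hN hρ0 hε
        · exact measure_cdf_lt_after_empiricalQuantile_le G hN hρ1 hε
        · exact (measure_iUnion_null fun i => Measure.pi_eval_preimage_null (fun _ => G) hsupp).le
    _ = ENNReal.ofReal (2 * Real.exp (-2 * N * ε ^ 2)) := by
        rw [add_zero, ← ENNReal.ofReal_add (by positivity) (by positivity), two_mul]

theorem iidPi_eq_pi (N : ℕ) (G : Measure ℝ) [SigmaFinite G] :
    iidPi N G = Measure.pi fun _ => G := by
  rw [iidPi, dif_pos ‹_›]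

theorem ofReal_one_sub_le_measure {α : Type*} [MeasurableSpace α] {μ : Measure α}
    [IsProbabilityMeasure μ] {s : Set α} {δ : ℝ} (hδ : 0 ≤ δ) (h : μ sᶜ ≤ ENNReal.ofReal δ) :
    ENNReal.ofReal (1 - δ) ≤ μ s := by
  rw [ENNReal.ofReal_sub _ hδ, ENNReal.ofReal_one, tsub_le_iff_right]
  calc 1 = μ univ := measure_univ.symm
    _ ≤ μ s + μ sᶜ := measure_univ_le_add_compl s
    _ ≤ μ s + ENNReal.ofReal δ := by gcongr

theorem exp_neg_two_mul_sq_sqrt_log_div {N δ : ℝ} (hN : 0 < N) (hδ0 : 0 < δ) (hδ2 : δ ≤ 2) :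
    Real.exp (-2 * N * Real.sqrt (Real.log (2 / δ) / (2 * N)) ^ 2) = δ / 2 := by
  have hlog : 0 ≤ Real.log (2 / δ) := Real.log_nonneg ((le_div_iff₀ hδ0).2 (by linarith))
  rw [Real.sq_sqrt (by positivity), show -2 * N * (Real.log (2 / δ) / (2 * N)) = -Real.log (2 / δ)
    by field_simp, Real.exp_neg, Real.exp_log (by positivity), inv_div]

theorem stmt14_general (b h : ℝ) (hb : 0 < b) (hh : 0 < h)
    (ρ : ℝ) (hρ : ρ = b / (b + h))
    (G : Measure ℝ) [IsProbabilityMeasure G] (hsupp : G (Iio 0) = 0)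
    (hint : Integrable id G)
    (lam : ℝ) (hcen : ρ ≤ (G (Iio lam)).toReal)
    (N : ℕ) (hN : 1 ≤ N) (δ : ℝ) (hδ : δ ∈ Ioo (0 : ℝ) 1) :
    ENNReal.ofReal (1 - δ) ≤
      iidPi N G {d : Fin N → ℝ |
        ρ ≤ (1 / (N : ℝ)) * ∑ i, (if d i < lam then (1 : ℝ) else 0) →
        nvCost b h G
            (sInf {x : ℝ | ρ ≤ (1 / (N : ℝ)) * ∑ i, (if d i ≤ x then (1 : ℝ) else 0)})
          - nvCost b h G (qStar ρ G)
          ≤ lam * (b + h) * Real.sqrt (Real.log (2 / δ) / (2 * N))} := by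
  have hbh : 0 < b + h := add_pos hb hh
  have hρ0 : 0 < ρ := hρ ▸ div_pos hb hbh
  have hρ1 : ρ < 1 := hρ ▸ (div_lt_one hbh).2 (lt_add_of_pos_right b hh)
  have hcdf_neg : ∀ x < 0, cdf G x < ρ := fun x hx => by
    rwa [cdf_eq_real, measureReal_def, measure_mono_null (Iic_subset_Iio.2 hx) hsupp]
  have hcdf_lam : ρ ≤ cdf G lam :=
    hcen.trans (cdf_eq_real G lam ▸ measureReal_mono Iio_subset_Iic_self)
  have hqStar : qStar ρ G ∈ Icc 0 lam :=
    qStar_eq_quantile_cdf ρ G ▸ quantile_mem_Icc hcdf_neg hcdf_lam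
  set ε := Real.sqrt (Real.log (2 / δ) / (2 * N))
  rw [iidPi_eq_pi]
  refine ofReal_one_sub_le_measure hδ.1.le <|
    ((measure_mono (compl_subset_compl.2 fun d hd => ?_)).trans
      (measure_compl_setOf_cdf_near_empiricalQuantile_le G hsupp hN hρ0 hρ1
        (Real.sqrt_nonneg _ : 0 ≤ ε))).trans_eq ?_
  · obtain ⟨hd0, hup, hlow⟩ := hd
    intro H
    have hq := quantile_empiricalCDF_mem_Icc d hd0 hρ0 H
    subst hρ
    calc _ ≤ (b + h) * ε * |quantile (empiricalCDF d) (b / (b + h)) - qStar (b / (b + h)) G| :=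
          nvCost_sub_nvCost_qStar_le hbh G hint
            ⟨0, mem_lowerBounds_setOf_le_of_forall_lt hcdf_neg⟩ ⟨lam, hcdf_lam⟩ hup hlow
      _ ≤ (b + h) * ε * lam := by
          gcongr
          exact abs_sub_le_of_nonneg_of_le hq.1 hq.2 hqStar.1 hqStar.2
      _ = _ := by ring
  · rw [exp_neg_two_mul_sq_sqrt_log_div (by positivity) hδ.1 (by linarith [hδ.2]),
      mul_div_cancel₀ _ two_ne_zero]

/-- with probability at least `1 - δ`, if the empirical mass strictly below `λ`
is at least `ρ`, then the SAA quantile has small excess newsvendor cost. -/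
theorem stmt14 (b h : ℝ) (hb : 0 < b) (hh : 0 < h)
    (ρ : ℝ) (hρ : ρ = b / (b + h))
    (G : Measure ℝ) [IsProbabilityMeasure G] (hsupp : G (Iio 0) = 0)
    (hint : Integrable id G)
    (lam : ℝ) (hlam : 0 ≤ lam) (hcen : ρ ≤ (G (Iio lam)).toReal)
    (N : ℕ) (hN : 1 ≤ N) (δ : ℝ) (hδ : δ ∈ Ioo (0 : ℝ) 1) :
    ENNReal.ofReal (1 - δ) ≤
      iidPi N G {d : Fin N → ℝ |
        ρ ≤ (1 / (N : ℝ)) * ∑ i, (if d i < lam then (1 : ℝ) else 0) →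
        nvCost b h G
            (sInf {x : ℝ | ρ ≤ (1 / (N : ℝ)) * ∑ i, (if d i ≤ x then (1 : ℝ) else 0)})
          - nvCost b h G (qStar ρ G)
          ≤ lam * (b + h) * Real.sqrt (Real.log (2 / δ) / (2 * N))} :=
  stmt14_general b h hb hh ρ hρ G hsupp hint lam hcen N hN δ hδ
end
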